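/- Let A = 𝔽₂[x,y]/(xy, x³ + y³, x⁴) (so A is the mod 2 cohomology ring of S³/Q_{8m} for m even). In A ⊗_{𝔽₂} A, set τ(z) = z⊗1 + 1⊗z, v₂ = τ(x)²(1⊗y) + τ(x)τ(y)(1⊗y), and v₃ = τ(x)²(y⊗1) + τ(y)²(x⊗1). Then v₂ · v₃ = x³ ⊗ y³ ≠ 0. -/

import Mathlib

open MvPolynomial TensorProduct

/-- `A = 𝔽₂[x,y]/(xy, x³ + y³, x⁴)`, the mod 2 cohomology ring of
`S³/Q_{8m}` for `m` even. -/
noncomputable abbrev A16 : Type :=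
  MvPolynomial Bool (ZMod 2) ⧸
    Ideal.span ({X false * X true, X false ^ 3 + X true ^ 3, X false ^ 4} :
      Set (MvPolynomial Bool (ZMod 2)))

noncomputable def x16 : A16 := Ideal.Quotient.mk _ (X false)
noncomputable def y16 : A16 := Ideal.Quotient.mk _ (X true)

/-- `τ(z) = z ⊗ 1 + 1 ⊗ z` in `A ⊗[𝔽₂] A`. -/
noncomputable def τ16 (z : A16) : A16 ⊗[ZMod 2] A16 := z ⊗ₜ 1 + 1 ⊗ₜ z

noncomputable def v2 : A16 ⊗[ZMod 2] A16 :=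
  τ16 x16 ^ 2 * ((1 : A16) ⊗ₜ y16) + τ16 x16 * τ16 y16 * ((1 : A16) ⊗ₜ y16)

noncomputable def v3' : A16 ⊗[ZMod 2] A16 :=
  τ16 x16 ^ 2 * (y16 ⊗ₜ (1 : A16)) + τ16 y16 ^ 2 * (x16 ⊗ₜ (1 : A16))

/-!
Write `a = x ⊗ 1`, `b = 1 ⊗ x`, `c = y ⊗ 1`, `d = 1 ⊗ y`. The relations `ac = bd = 0` and
`b³ + d³ = 0` reduce `v₂` to `a²d + ad²` and `v₃` to `b²c + ad²`, and since also
`d⁴ = d(b³ + d³) - b²·bd = 0`, their product is `a³d³ = x³ ⊗ y³`. Over a field a pure tensor of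
nonzero vectors is nonzero, and `y³ = -x³ ≠ 0` in `A` because the sum of the `x³`- and
`y³`-coefficients of a polynomial vanishes on the relation ideal.
-/

theorem mul_eq_pow_mul_pow_of_mul_eq_zero {R : Type*} [CommRing R] {a b c d : R}
    (hac : a * c = 0) (hbd : b * d = 0) (hbd3 : b ^ 3 + d ^ 3 = 0) :
    ((a + b) ^ 2 * d + (a + b) * (c + d) * d) * ((a + b) ^ 2 * c + (c + d) ^ 2 * a) =
      a ^ 3 * d ^ 3 := by
  have hleft : (a + b) ^ 2 * d + (a + b) * (c + d) * d = a ^ 2 * d + a * d ^ 2 := by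
    linear_combination (2 * a + b + c + d) * hbd + d * hac
  have hright : (a + b) ^ 2 * c + (c + d) ^ 2 * a = b ^ 2 * c + a * d ^ 2 := by
    linear_combination (a + 2 * b + c + 2 * d) * hac
  have hd4 : d ^ 4 = 0 := by linear_combination d * hbd3 - b ^ 2 * hbd
  rw [hleft, hright]
  linear_combination (a ^ 2 * b * c + a * b * c * d) * hbd + a ^ 2 * hd4

open Algebra.TensorProduct in
theorem tmul_pow_three_eq_of_mul_eq_zero {R A : Type*} [CommRing R] [CommRing A] [Algebra R A]
    {x y : A} (hxy : x * y = 0) (hxy3 : x ^ 3 + y ^ 3 = 0) :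
    ((x ⊗ₜ[R] 1 + 1 ⊗ₜ x) ^ 2 * (1 ⊗ₜ y) + (x ⊗ₜ 1 + 1 ⊗ₜ x) * (y ⊗ₜ 1 + 1 ⊗ₜ y) * (1 ⊗ₜ y)) *
        ((x ⊗ₜ 1 + 1 ⊗ₜ x) ^ 2 * (y ⊗ₜ 1) + (y ⊗ₜ 1 + 1 ⊗ₜ y) ^ 2 * (x ⊗ₜ 1)) =
      (x ^ 3) ⊗ₜ (y ^ 3) := by
  rw [mul_eq_pow_mul_pow_of_mul_eq_zero (by rw [tmul_mul_tmul, hxy, mul_one, zero_tmul])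
      (by rw [tmul_mul_tmul, hxy, mul_one, tmul_zero])
      (by rw [tmul_pow, tmul_pow, one_pow, ← tmul_add, hxy3, tmul_zero]),
    tmul_pow, tmul_pow, tmul_mul_tmul, one_pow, mul_one, one_mul]

theorem TensorProduct.tmul_ne_zero {K V W : Type*} [Field K] [AddCommGroup V] [Module K V]
    [AddCommGroup W] [Module K W] {v : V} {w : W} (hv : v ≠ 0) (hw : w ≠ 0) :
    v ⊗ₜ[K] w ≠ 0 := by
  obtain ⟨f, hf⟩ := Module.Projective.exists_dual_ne_zero K hv
  obtain ⟨g, hg⟩ := Module.Projective.exists_dual_ne_zero K hw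
  intro h
  have hfg := congrArg ((TensorProduct.lid K K).toLinearMap ∘ₗ TensorProduct.map f g) h
  simp only [LinearMap.comp_apply, map_tmul, LinearEquiv.coe_coe, lid_tmul, smul_eq_mul,
    map_zero] at hfg
  exact mul_ne_zero hf hg hfg

noncomputable abbrev relIdeal : Ideal (MvPolynomial Bool (ZMod 2)) :=
  Ideal.span {X false * X true, X false ^ 3 + X true ^ 3, X false ^ 4}

noncomputable def cubicCoeff : MvPolynomial Bool (ZMod 2) →ₗ[ZMod 2] ZMod 2 :=
  lcoeff (ZMod 2) (Finsupp.single false 3) + lcoeff (ZMod 2) (Finsupp.single true 3)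

lemma cubicCoeff_apply (p : MvPolynomial Bool (ZMod 2)) :
    cubicCoeff p = coeff (Finsupp.single false 3) p + coeff (Finsupp.single true 3) p := rfl

lemma cubicCoeff_mul_X_mul_X (r : MvPolynomial Bool (ZMod 2)) :
    cubicCoeff (r * (X false * X true)) = 0 := by
  have hXY : (X false * X true : MvPolynomial Bool (ZMod 2)) =
      monomial (Finsupp.single false 1 + Finsupp.single true 1) 1 := by
    rw [X, X, monomial_mul, one_mul]
  simp [cubicCoeff_apply, hXY, coeff_mul_monomial', Finsupp.le_def]

lemma cubicCoeff_mul_X_pow_add_X_pow (r : MvPolynomial Bool (ZMod 2)) :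
    cubicCoeff (r * (X false ^ 3 + X true ^ 3)) = 0 := by
  simp [cubicCoeff_apply, X_pow_eq_monomial, mul_add, coeff_mul_monomial', Finsupp.le_def,
    CharTwo.add_self_eq_zero]

lemma cubicCoeff_mul_X_pow_four (r : MvPolynomial Bool (ZMod 2)) :
    cubicCoeff (r * X false ^ 4) = 0 := by
  simp [cubicCoeff_apply, X_pow_eq_monomial, coeff_mul_monomial', Finsupp.le_def]

lemma cubicCoeff_eq_zero_of_mem {p : MvPolynomial Bool (ZMod 2)} (hp : p ∈ relIdeal) :
    cubicCoeff p = 0 := by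
  suffices ∀ r, cubicCoeff (r * p) = 0 by simpa using this 1
  induction hp using Submodule.span_induction with
  | mem g hg =>
    rcases hg with rfl | rfl | rfl
    exacts [cubicCoeff_mul_X_mul_X, cubicCoeff_mul_X_pow_add_X_pow, cubicCoeff_mul_X_pow_four]
  | zero => simp
  | add p q _ _ hp hq => simp [mul_add, hp, hq]
  | smul s p _ hp => intro r; rw [smul_eq_mul, ← mul_assoc]; exact hp (r * s)

lemma x16_mul_y16 : x16 * y16 = 0 := by
  rw [x16, y16, ← map_mul, Ideal.Quotient.eq_zero_iff_mem]
  exact Ideal.subset_span (by simp)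

lemma x16_pow_three_add_y16_pow_three : x16 ^ 3 + y16 ^ 3 = 0 := by
  rw [x16, y16, ← map_pow, ← map_pow, ← map_add, Ideal.Quotient.eq_zero_iff_mem]
  exact Ideal.subset_span (by simp)

lemma x16_pow_three_ne_zero : x16 ^ 3 ≠ 0 := by
  rw [x16, ← map_pow, Ne, Ideal.Quotient.eq_zero_iff_mem]
  intro h
  simpa [cubicCoeff_apply, coeff_X_pow, Finsupp.single_eq_single_iff] using
    cubicCoeff_eq_zero_of_mem h

lemma y16_pow_three_ne_zero : y16 ^ 3 ≠ 0 := by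
  rw [← neg_ne_zero, ← eq_neg_of_add_eq_zero_left x16_pow_three_add_y16_pow_three]
  exact x16_pow_three_ne_zero

/-- In `A ⊗[𝔽₂] A` with `A = 𝔽₂[x,y]/(xy, x³+y³, x⁴)`,
`v₂ · v₃ = x³ ⊗ y³ ≠ 0`. -/
theorem stmt16 :
    v2 * v3' = (x16 ^ 3) ⊗ₜ (y16 ^ 3) ∧ v2 * v3' ≠ 0 := by
  have h : v2 * v3' = (x16 ^ 3) ⊗ₜ (y16 ^ 3) :=
    tmul_pow_three_eq_of_mul_eq_zero x16_mul_y16 x16_pow_three_add_y16_pow_three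
  exact ⟨h, h ▸ tmul_ne_zero x16_pow_three_ne_zero y16_pow_three_ne_zero⟩
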